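/- arXiv:2309.03464 — 3 statements merged into one kernel-verified Lean document; each statement's English description precedes it below -/
import Mathlib

section
/- Let n be a nonempty finite index type and let A : Matrix n n ℝ be a square matrix with A i j ≥ 0 for all i, j, whose spectral radius satisfies λ(A) > 0. Then there exists a nonempty subset S of the index set such that the principal submatrix A_S = (A i j)_{i,j ∈ S} is irreducible and λ(A_S) = λ(A). -/
/-!
If `A` is not irreducible, there is a nonempty proper set `U` of indices with `A i j = 0` for
`i ∈ U`, `j ∉ U`: the indices reachable from an `i` that cannot reach some `j`, or `{i}` itself
when nothing is reachable from `i` (positivity of `λ(A)` excludes the `1 × 1` zero matrix).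
Ordering `U` first makes `A` block triangular, so its characteristic polynomial is the product of
those of `A_U` and `A_Uᶜ`, and `λ(A)` is the larger of their spectral radii. Passing to a block
attaining it shrinks the index set without changing the spectral radius, so strong induction on
the index set ends at an irreducible principal submatrix.
-/

open Matrix

/-- The spectral radius of a real square matrix: the supremum of the moduli of the
complex eigenvalues, i.e. the spectral radius of the complexified matrix. -/
noncomputable def matrixSpectralRadius {n : Type*} [Fintype n] [DecidableEq n]
    (A : Matrix n n ℝ) : ENNReal :=
  spectralRadius ℂ (A.map (Complex.ofReal : ℝ → ℂ))

/-- A square matrix (with nonnegative real entries) is irreducible if for every pair of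
indices `i, j` some power `A ^ k` (`k ≥ 1`) has strictly positive `(i, j)` entry. -/
def MatrixIrreducible {n : Type*} [Fintype n] [DecidableEq n] (A : Matrix n n ℝ) : Prop :=
  ∀ i j, ∃ k : ℕ, 1 ≤ k ∧ 0 < (A ^ k) i j

open Finset Polynomial

namespace Matrix

variable {m R : Type*} [Fintype m] [DecidableEq m]

lemma toSquareBlockProp_charmatrix [CommRing R] (M : Matrix m m R) (p : m → Prop)
    [DecidablePred p] :
    (M.toSquareBlockProp p).charmatrix = M.charmatrix.toSquareBlockProp p := by
  ext i j : 1
  simp [charmatrix_apply, toSquareBlockProp_def, diagonal_apply, Subtype.ext_iff]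

theorem twoBlockTriangular_charpoly [CommRing R] (M : Matrix m m R) (p : m → Prop)
    [DecidablePred p] (h : ∀ i, p i → ∀ j, ¬p j → M i j = 0) :
    M.charpoly =
      (M.toSquareBlockProp p).charpoly * (M.toSquareBlockProp fun i => ¬p i).charpoly := by
  rw [charpoly, twoBlockTriangular_det' _ p, charpoly, charpoly, toSquareBlockProp_charmatrix,
    toSquareBlockProp_charmatrix]
  intro i hi j hj
  have hij : i ≠ j := by rintro rfl; exact hj hi
  rw [charmatrix_apply_ne _ _ _ hij, h i hi j hj, map_zero, neg_zero]

lemma pow_succ_apply_pos [Semiring R] [PartialOrder R] [IsStrictOrderedRing R]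
    {A : Matrix m m R} (hA : ∀ i j, 0 ≤ A i j) {k : ℕ} {i t s : m}
    (hk : 0 < (A ^ k) i t) (ht : 0 < A t s) : 0 < (A ^ (k + 1)) i s := by
  rw [pow_succ, mul_apply]
  exact sum_pos' (fun u _ => mul_nonneg (pow_apply_nonneg hA k i u) (hA u s))
    ⟨t, mem_univ t, mul_pos hk ht⟩

end Matrix

section SpectralRadius

variable {m n o : Type*} [Fintype m] [DecidableEq m] [Fintype n] [DecidableEq n]
  [Fintype o] [DecidableEq o]

lemma matrixSpectralRadius_eq_iSup_isRoot (A : Matrix m m ℝ) :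
    matrixSpectralRadius A =
      ⨆ (z : ℂ) (_ : (A.charpoly.map Complex.ofRealHom).IsRoot z), (‖z‖₊ : ENNReal) := by
  simp only [matrixSpectralRadius, spectralRadius, mem_spectrum_iff_isRoot_charpoly,
    ← charpoly_map]
  rfl

lemma matrixSpectralRadius_eq_of_charpoly_eq {A : Matrix m m ℝ} {B : Matrix n n ℝ}
    (h : A.charpoly = B.charpoly) : matrixSpectralRadius A = matrixSpectralRadius B := by
  simp only [matrixSpectralRadius_eq_iSup_isRoot, h]

lemma matrixSpectralRadius_eq_sup_of_charpoly_eq_mul {A : Matrix m m ℝ} {B : Matrix n n ℝ}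
    {C : Matrix o o ℝ} (h : A.charpoly = B.charpoly * C.charpoly) :
    matrixSpectralRadius A = matrixSpectralRadius B ⊔ matrixSpectralRadius C := by
  simp only [matrixSpectralRadius_eq_iSup_isRoot, h, Polynomial.map_mul, root_mul, iSup_or,
    iSup_sup_eq]

lemma matrixSpectralRadius_submatrix_equiv (A : Matrix n n ℝ) (e : m ≃ n) :
    matrixSpectralRadius (A.submatrix e e) = matrixSpectralRadius A :=
  matrixSpectralRadius_eq_of_charpoly_eq (charpoly_reindex e.symm A)

lemma matrixSpectralRadius_zero : matrixSpectralRadius (0 : Matrix m m ℝ) = 0 := by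
  simp [matrixSpectralRadius]

lemma nonempty_of_matrixSpectralRadius_pos {A : Matrix m m ℝ}
    (hpos : 0 < matrixSpectralRadius A) : Nonempty m := by
  by_contra h
  rw [not_nonempty_iff] at h
  simp [matrixSpectralRadius] at hpos

end SpectralRadius

section PrincipalSubmatrix

variable {m : Type*} [Fintype m] [DecidableEq m]

lemma matrixSpectralRadius_eq_sup_of_twoBlockTriangular (A : Matrix m m ℝ) (p : m → Prop)
    [DecidablePred p] (h : ∀ i, p i → ∀ j, ¬p j → A i j = 0) :
    matrixSpectralRadius A = matrixSpectralRadius (A.toSquareBlockProp p) ⊔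
      matrixSpectralRadius (A.toSquareBlockProp fun i => ¬p i) :=
  matrixSpectralRadius_eq_sup_of_charpoly_eq_mul (A.twoBlockTriangular_charpoly p h)

lemma matrixSpectralRadius_eq_sup_of_forall_mem_not_mem (A : Matrix m m ℝ) (U : Finset m)
    (h : ∀ i ∈ U, ∀ j ∉ U, A i j = 0) :
    matrixSpectralRadius A = matrixSpectralRadius (A.submatrix ((↑) : U → m) (↑)) ⊔
      matrixSpectralRadius (A.submatrix ((↑) : ↥Uᶜ → m) (↑)) := by
  rw [← matrixSpectralRadius_submatrix_equiv (A.submatrix ((↑) : ↥Uᶜ → m) (↑))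
    (Equiv.subtypeEquivRight fun _ => mem_compl.symm)]
  convert matrixSpectralRadius_eq_sup_of_twoBlockTriangular A (· ∈ U) h using 3 <;> rfl

lemma exists_finset_of_not_matrixIrreducible {A : Matrix m m ℝ} (hA : ∀ i j, 0 ≤ A i j)
    (hirr : ¬MatrixIrreducible A) (hpos : 0 < matrixSpectralRadius A) :
    ∃ U : Finset m, U.Nonempty ∧ U ≠ univ ∧ ∀ i ∈ U, ∀ j ∉ U, A i j = 0 := by
  classical
  obtain ⟨i, j, hij⟩ : ∃ i j, ∀ k, 1 ≤ k → (A ^ k) i j ≤ 0 := by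
    simpa [MatrixIrreducible] using hirr
  set reach := univ.filter fun s => ∃ k, 1 ≤ k ∧ 0 < (A ^ k) i s
  have reach_closed : ∀ t ∈ reach, ∀ s ∉ reach, A t s = 0 := by
    simp only [reach, mem_filter, mem_univ, true_and, not_exists, not_and, not_lt]
    rintro t ⟨k, hk, hkt⟩ s hs
    exact le_antisymm (not_lt.1 fun hts => (hs (k + 1) (by omega)).not_gt
      (pow_succ_apply_pos hA hkt hts)) (hA t s)
  have j_not_mem : j ∉ reach := by
    simpa [reach] using hij
  by_cases hreach : reach.Nonempty
  · exact ⟨reach, hreach, fun h => j_not_mem (h ▸ mem_univ j), reach_closed⟩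
  have hrow : ∀ s, A i s = 0 := fun s =>
    le_antisymm (not_lt.1 fun his => hreach ⟨s, by simpa [reach] using ⟨1, le_rfl, by simpa⟩⟩)
      (hA i s)
  refine ⟨{i}, singleton_nonempty i, fun hi => hpos.ne' ?_, fun t ht s _ => ?_⟩
  · have hA0 : A = 0 := by
      ext t s
      rw [eq_univ_iff_forall.1 hi t |> mem_singleton.1, hrow]
      rfl
    rw [hA0, matrixSpectralRadius_zero]
  · rw [mem_singleton.1 ht, hrow]

lemma exists_ne_univ_matrixSpectralRadius_submatrix_eq {A : Matrix m m ℝ}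
    (hA : ∀ i j, 0 ≤ A i j) (hirr : ¬MatrixIrreducible A) (hpos : 0 < matrixSpectralRadius A) :
    ∃ U : Finset m, U ≠ univ ∧
      matrixSpectralRadius (A.submatrix ((↑) : U → m) (↑)) = matrixSpectralRadius A := by
  obtain ⟨U, hU, hU_ne, hclosed⟩ := exists_finset_of_not_matrixIrreducible hA hirr hpos
  rw [matrixSpectralRadius_eq_sup_of_forall_mem_not_mem A U hclosed]
  rcases le_total (matrixSpectralRadius (A.submatrix ((↑) : U → m) (↑)))
    (matrixSpectralRadius (A.submatrix ((↑) : ↥Uᶜ → m) (↑))) with hle | hle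
  · exact ⟨Uᶜ, (compl_ne_univ_iff_nonempty U).2 hU, (sup_eq_right.2 hle).symm⟩
  · exact ⟨U, hU_ne, (sup_eq_left.2 hle).symm⟩

lemma exists_ssubset_matrixSpectralRadius_submatrix_eq {n : Type*} [DecidableEq n]
    (A : Matrix n n ℝ) {S : Finset n} {U : Finset S} (hU : U ≠ univ) :
    ∃ T : Finset n, T ⊂ S ∧ matrixSpectralRadius (A.submatrix ((↑) : T → n) (↑)) =
      matrixSpectralRadius ((A.submatrix ((↑) : S → n) ((↑) : S → n)).submatrix
        ((↑) : U → S) ((↑) : U → S)) := by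
  refine ⟨U.map (Function.Embedding.subtype _), ?_, ?_⟩
  · simpa [univ_eq_attach, attach_map_val] using
      map_ssubset_map (f := Function.Embedding.subtype (· ∈ S)).2 (ssubset_univ_iff.2 hU)
  · rw [← matrixSpectralRadius_submatrix_equiv _ (U.equivMap (Function.Embedding.subtype _))]
    rfl

end PrincipalSubmatrix

theorem exists_irreducible_principal_submatrix_same_spectral_radius_general
    {n : Type*} [Fintype n] [DecidableEq n]
    (A : Matrix n n ℝ) (hA : ∀ i j, 0 ≤ A i j)
    (hpos : 0 < matrixSpectralRadius A) :
    ∃ S : Finset n, S.Nonempty ∧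
      MatrixIrreducible (A.submatrix (Subtype.val : S → n) (Subtype.val : S → n)) ∧
      matrixSpectralRadius (A.submatrix (Subtype.val : S → n) (Subtype.val : S → n)) =
        matrixSpectralRadius A := by
  suffices key : ∀ S : Finset n,
      matrixSpectralRadius (A.submatrix ((↑) : S → n) (↑)) = matrixSpectralRadius A →
      ∃ T : Finset n, T.Nonempty ∧ MatrixIrreducible (A.submatrix ((↑) : T → n) (↑)) ∧
        matrixSpectralRadius (A.submatrix ((↑) : T → n) (↑)) = matrixSpectralRadius A from
    key univ (matrixSpectralRadius_submatrix_equiv A (Equiv.subtypeUnivEquiv mem_univ))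
  intro S hS
  induction S using Finset.strongInduction with
  | H S ih =>
    have hS_pos : 0 < matrixSpectralRadius (A.submatrix ((↑) : S → n) (↑)) := hS ▸ hpos
    by_cases hirr : MatrixIrreducible (A.submatrix ((↑) : S → n) (↑))
    · exact ⟨S, nonempty_coe_sort.1 (nonempty_of_matrixSpectralRadius_pos hS_pos), hirr, hS⟩
    obtain ⟨U, hU, hU_rad⟩ :=
      exists_ne_univ_matrixSpectralRadius_submatrix_eq (fun _ _ => hA _ _) hirr hS_pos
    obtain ⟨T, hTS, hT_rad⟩ := exists_ssubset_matrixSpectralRadius_submatrix_eq A hU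
    exact ih T hTS (hT_rad.trans (hU_rad.trans hS))

/--
For a nonnegative square matrix `A` with positive spectral radius, there is a nonempty
subset `S` of the indices such that the principal submatrix of `A` on `S` is irreducible
and has the same spectral radius as `A`.
-/
theorem exists_irreducible_principal_submatrix_same_spectral_radius
    {n : Type*} [Fintype n] [DecidableEq n] [Nonempty n]
    (A : Matrix n n ℝ) (hA : ∀ i j, 0 ≤ A i j)
    (hpos : 0 < matrixSpectralRadius A) :
    ∃ S : Finset n, S.Nonempty ∧
      MatrixIrreducible (A.submatrix (Subtype.val : S → n) (Subtype.val : S → n)) ∧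
      matrixSpectralRadius (A.submatrix (Subtype.val : S → n) (Subtype.val : S → n)) =
        matrixSpectralRadius A :=
  exists_irreducible_principal_submatrix_same_spectral_radius_general A hA hpos
end

section
/- Let n be a finite index type and let A, B : Matrix n n ℝ be square matrices satisfying 0 ≤ B i j ≤ A i j for all indices i, j. Then the spectral radii satisfy λ(B) ≤ λ(A). -/
/-!
By Gelfand's formula `λ(M) = lim ‖M ^ k‖ ^ (1 / k)` for any submultiplicative norm, so it
suffices that `‖B ^ k‖ ≤ ‖A ^ k‖` for every `k` in the `ℓ∞` operator norm. That norm is monotone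
in the moduli of the entries, and `0 ≤ B ≤ A` entrywise propagates to all powers.
-/

open Matrix

theorem spectralRadius_le_of_forall_nnnorm_pow_le {A : Type*} [NormedRing A] [NormedAlgebra ℂ A]
    [CompleteSpace A] {a b : A} (h : ∀ k : ℕ, ‖a ^ k‖₊ ≤ ‖b ^ k‖₊) :
    spectralRadius ℂ a ≤ spectralRadius ℂ b :=
  le_of_tendsto_of_tendsto' (spectrum.pow_nnnorm_pow_one_div_tendsto_nhds_spectralRadius a)
    (spectrum.pow_nnnorm_pow_one_div_tendsto_nhds_spectralRadius b) fun k =>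
      ENNReal.rpow_le_rpow (ENNReal.coe_le_coe.mpr (h k)) (by positivity)

namespace Matrix

theorem pow_apply_le_pow_apply {n R : Type*} [Fintype n] [DecidableEq n] [Semiring R]
    [PartialOrder R] [IsOrderedRing R] {A B : Matrix n n R} (hB : ∀ i j, 0 ≤ B i j)
    (hBA : ∀ i j, B i j ≤ A i j) (k : ℕ) : ∀ i j, (B ^ k) i j ≤ (A ^ k) i j := by
  induction k with
  | zero => exact fun i j => le_rfl
  | succ k ih =>
    intro i j
    simp only [pow_succ, mul_apply]
    refine Finset.sum_le_sum fun l _ => mul_le_mul (ih i l) (hBA l j) (hB l j) ?_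
    exact (pow_apply_nonneg hB k i l).trans (ih i l)

attribute [local instance] Matrix.linftyOpSeminormedAddCommGroup Matrix.linftyOpNormedRing
  Matrix.linftyOpNormedAlgebra

theorem linfty_opNNNorm_le_of_forall_nnnorm_apply_le {m n α β : Type*} [Fintype m] [Fintype n]
    [SeminormedAddCommGroup α] [SeminormedAddCommGroup β] {A : Matrix m n α} {B : Matrix m n β}
    (h : ∀ i j, ‖A i j‖₊ ≤ ‖B i j‖₊) : ‖A‖₊ ≤ ‖B‖₊ := by
  rw [linfty_opNNNorm_def, linfty_opNNNorm_def]
  exact Finset.sup_mono_fun fun i _ => Finset.sum_le_sum fun j _ => h i j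

theorem spectralRadius_map_ofReal_le_of_entrywise_le {n : Type*} [Fintype n] [DecidableEq n]
    {A B : Matrix n n ℝ} (hB : ∀ i j, 0 ≤ B i j) (hBA : ∀ i j, B i j ≤ A i j) :
    spectralRadius ℂ (B.map Complex.ofReal) ≤ spectralRadius ℂ (A.map Complex.ofReal) := by
  refine spectralRadius_le_of_forall_nnnorm_pow_le fun k => ?_
  have map_ofReal_pow (M : Matrix n n ℝ) : M.map Complex.ofReal ^ k = (M ^ k).map Complex.ofReal :=
    (M.map_pow Complex.ofRealHom k).symm
  rw [map_ofReal_pow, map_ofReal_pow]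
  refine linfty_opNNNorm_le_of_forall_nnnorm_apply_le fun i j => ?_
  have hBk := pow_apply_nonneg hB k i j
  have hBAk := pow_apply_le_pow_apply hB hBA k i j
  simp only [map_apply, Complex.nnnorm_real, Real.nnnorm_of_nonneg hBk,
    Real.nnnorm_of_nonneg (hBk.trans hBAk)]
  exact hBAk

end Matrix

/--
If `0 ≤ B i j ≤ A i j` for all indices `i, j`, then the spectral radius of `B`
is at most the spectral radius of `A`.
-/
theorem spectral_radius_mono_of_entrywise_le
    {n : Type*} [Fintype n] [DecidableEq n]
    (A B : Matrix n n ℝ) (hB : ∀ i j, 0 ≤ B i j) (hBA : ∀ i j, B i j ≤ A i j) :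
    matrixSpectralRadius B ≤ matrixSpectralRadius A :=
  spectralRadius_map_ofReal_le_of_entrywise_le hB hBA
end

section
/- Let P be a monic polynomial of degree d ≥ 1 with complex coefficients. Then the map χ⁻¹ ∘ P ∘ χ : 𝔻 → 𝔻 extends continuously to the closed unit disc with boundary value z ↦ z^d; precisely, there exists a continuous map G from the closed unit disc {z ∈ ℂ : |z| ≤ 1} to itself such that χ(G(z)) = P(χ(z)) for every z with |z| < 1 and G(z) = z^d for every z with |z| = 1. -/
/-- The map `χ(z) = |z|·z / (1 - |z|)` on the open unit disc (as a formula on `ℂ`). -/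
noncomputable def chi (z : ℂ) : ℂ :=
  (‖z‖ : ℂ) * z / (1 - (‖z‖ : ℂ))

/-!
The map `χ` is radial: it keeps the direction `z / |z|` and sends the modulus `r` to
`r² / (1 - r)`. Hence `χ⁻¹ w = ρ(|w|) · w / |w|`, where `ρ(R) = (√(R² + 4R) - R) / 2` is the root
in `[0, 1)` of `ρ² / (1 - ρ) = R`. Take `G = χ⁻¹ ∘ P ∘ χ` on the open disc and `G z = z ^ d` on the
circle. When `z` tends to a boundary point `x`, `χ z` tends to infinity with direction
`z / |z| → x`, so `ρ(|P (χ z)|) → 1`; and since `P w ~ w ^ d` at infinity, the direction of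
`P (χ z)` is asymptotic to `(z / |z|) ^ d → x ^ d`.
-/

open Filter Topology Bornology Asymptotics

namespace NormedSpace

section
variable {V : Type*} [NormedAddCommGroup V] [NormedSpace ℝ V]

lemma norm_normalize_le (x : V) : ‖normalize x‖ ≤ 1 := by
  rcases eq_or_ne x 0 with rfl | hx
  · simp
  · exact (norm_normalize hx).le

lemma continuousAt_normalize {x : V} (hx : x ≠ 0) : ContinuousAt normalize x := by
  have : ‖x‖ ≠ 0 := norm_ne_zero_iff.2 hx
  unfold normalize
  fun_prop (disch := assumption)

lemma norm_mul_norm_normalize_sub_le (a b : V) :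
    ‖b‖ * ‖normalize a - normalize b‖ ≤ 2 * ‖a - b‖ := by
  have key : ‖b‖ • (normalize a - normalize b) = (a - b) + (‖b‖ - ‖a‖) • normalize a := by
    rw [smul_sub, norm_smul_normalize, sub_smul, norm_smul_normalize]
    abel
  calc ‖b‖ * ‖normalize a - normalize b‖
      = ‖(a - b) + (‖b‖ - ‖a‖) • normalize a‖ := by rw [← key, norm_smul, norm_norm]
    _ ≤ ‖a - b‖ + |‖b‖ - ‖a‖| * 1 := by
        grw [norm_add_le, norm_smul, Real.norm_eq_abs, norm_normalize_le]
    _ ≤ 2 * ‖a - b‖ := by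
        rw [mul_one, norm_sub_rev a b]
        linarith [abs_norm_sub_norm_le b a]

end

lemma normalize_pow {A : Type*} [NormedRing A] [NormedAlgebra ℝ A] [NormMulClass A]
    [NormOneClass A] (x : A) (n : ℕ) : normalize (x ^ n) = normalize x ^ n := by
  simp [normalize, norm_pow, smul_pow, inv_pow]

end NormedSpace

lemma Asymptotics.IsEquivalent.tendsto_normalize_sub {α V : Type*} [NormedAddCommGroup V]
    [NormedSpace ℝ V] {l : Filter α} {u v : α → V} (h : u ~[l] v) :
    Tendsto (fun x => NormedSpace.normalize (u x) - NormedSpace.normalize (v x)) l (𝓝 0) := by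
  rw [Metric.tendsto_nhds]
  intro ε hε
  filter_upwards [h.isLittleO.bound (by positivity : 0 < ε / 3)] with x hx
  rw [dist_zero_right]
  rcases eq_or_ne (v x) 0 with hv | hv
  · have : u x = v x := by simpa [hv] using hx
    simpa [this] using hε
  · have hv' : 0 < ‖v x‖ := norm_pos_iff.2 hv
    have := NormedSpace.norm_mul_norm_normalize_sub_le (u x) (v x)
    simp only [Pi.sub_apply] at hx
    nlinarith

namespace Polynomial

lemma tendsto_eval_cobounded {R : Type*} [NormedRing R] [IsAbsoluteValue (norm : R → ℝ)]
    {P : R[X]} (h : 0 < P.natDegree) : Tendsto P.eval (cobounded R) (cobounded R) := by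
  rw [← tendsto_norm_atTop_iff_cobounded]
  exact P.tendsto_norm_atTop (natDegree_pos_iff_degree_pos.1 h) tendsto_norm_cobounded_atTop

lemma Monic.tendsto_normalize_eval_sub_pow {A : Type*} [NormedRing A] [NormedAlgebra ℝ A]
    [NormMulClass A] [NormOneClass A] {P : A[X]} (hP : P.Monic) :
    Tendsto (fun w => NormedSpace.normalize (P.eval w) - NormedSpace.normalize w ^ P.natDegree)
      (cobounded A) (𝓝 0) := by
  simpa [hP.leadingCoeff, NormedSpace.normalize_pow] using
    (isEquivalent_cobounded_leading_monomial (P := P)).tendsto_normalize_sub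

end Polynomial

lemma chi_eq_smul (z : ℂ) : chi z = (‖z‖ / (1 - ‖z‖)) • z := by
  rw [chi, Complex.real_smul]; push_cast; ring

lemma normalize_chi {z : ℂ} (hz : ‖z‖ < 1) :
    NormedSpace.normalize (chi z) = NormedSpace.normalize z := by
  rcases eq_or_ne z 0 with rfl | hz0
  · simp [chi]
  · rw [chi_eq_smul, NormedSpace.normalize_smul_of_pos (div_pos (norm_pos_iff.2 hz0) (by linarith))]

lemma continuousOn_chi : ContinuousOn chi (Metric.ball 0 1) := by
  intro z hz
  rw [mem_ball_zero_iff] at hz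
  have : 1 - ‖z‖ ≠ 0 := by linarith
  have : ContinuousAt (fun z : ℂ => (‖z‖ / (1 - ‖z‖)) • z) z := by fun_prop (disch := assumption)
  exact (funext chi_eq_smul ▸ this).continuousWithinAt

lemma tendsto_chi_cobounded {x : ℂ} (hx : ‖x‖ = 1) :
    Tendsto chi (𝓝[Metric.ball 0 1] x) (cobounded ℂ) := by
  have hnorm : Tendsto (‖·‖) (𝓝[Metric.ball 0 1] x) (𝓝 (1 : ℝ)) :=
    hx ▸ continuous_norm.continuousWithinAt
  have hgap : Tendsto (fun z : ℂ => 1 - ‖z‖) (𝓝[Metric.ball 0 1] x) (𝓝[>] 0) := by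
    refine tendsto_nhdsWithin_iff.2
      ⟨by simpa using (tendsto_const_nhds (x := (1 : ℝ))).sub hnorm, ?_⟩
    filter_upwards [self_mem_nhdsWithin] with z hz
    simpa [sub_pos] using hz
  rw [← tendsto_norm_atTop_iff_cobounded]
  refine ((one_pow (M := ℝ) 2 ▸ hnorm.pow 2).pos_mul_atTop one_pos
    hgap.inv_tendsto_nhdsGT_zero).congr' ?_
  filter_upwards [self_mem_nhdsWithin] with z hz
  rw [mem_ball_zero_iff] at hz
  rw [chi_eq_smul, norm_smul, Real.norm_eq_abs, abs_div, abs_of_nonneg (norm_nonneg z),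
    abs_of_pos (by linarith : 0 < 1 - ‖z‖)]
  simp only [Pi.inv_apply]
  ring

noncomputable def chiInvRadius (R : ℝ) : ℝ := (Real.sqrt (R ^ 2 + 4 * R) - R) / 2

@[simp] lemma chiInvRadius_zero : chiInvRadius 0 = 0 := by simp [chiInvRadius]

@[fun_prop]
lemma continuous_chiInvRadius : Continuous chiInvRadius := by
  unfold chiInvRadius; fun_prop

lemma chiInvRadius_nonneg {R : ℝ} (hR : 0 ≤ R) : 0 ≤ chiInvRadius R := by
  have : R ≤ Real.sqrt (R ^ 2 + 4 * R) := Real.le_sqrt_of_sq_le (by nlinarith)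
  unfold chiInvRadius; linarith

lemma chiInvRadius_lt_one {R : ℝ} (hR : 0 ≤ R) : chiInvRadius R < 1 := by
  have : Real.sqrt (R ^ 2 + 4 * R) < R + 2 := (Real.sqrt_lt' (by linarith)).2 (by nlinarith)
  unfold chiInvRadius; linarith

lemma chiInvRadius_sq_add_mul {R : ℝ} (hR : 0 ≤ R) :
    chiInvRadius R ^ 2 + R * chiInvRadius R = R := by
  have := Real.sq_sqrt (show 0 ≤ R ^ 2 + 4 * R by positivity)
  unfold chiInvRadius; linear_combination this / 4

lemma tendsto_chiInvRadius_atTop : Tendsto chiInvRadius atTop (𝓝 1) := by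
  -- `R (1 - ρ) = ρ² ≤ 1` squeezes `ρ` between `1 - R⁻¹` and `1`
  have lower : ∀ᶠ R in atTop, 1 - R⁻¹ ≤ chiInvRadius R := by
    filter_upwards [eventually_gt_atTop 0] with R hR
    have h1 := chiInvRadius_sq_add_mul hR.le
    have h2 := chiInvRadius_lt_one hR.le
    have h3 := chiInvRadius_nonneg hR.le
    rw [sub_le_comm, inv_eq_one_div, le_div_iff₀ hR]
    nlinarith
  have hlim : Tendsto (fun R : ℝ => 1 - R⁻¹) atTop (𝓝 1) := by
    simpa using tendsto_const_nhds.sub tendsto_inv_atTop_zero (a := (1 : ℝ))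
  exact tendsto_of_tendsto_of_tendsto_of_le_of_le' hlim tendsto_const_nhds lower
    ((eventually_ge_atTop 0).mono fun R hR => (chiInvRadius_lt_one hR).le)

noncomputable def chiInv (w : ℂ) : ℂ := chiInvRadius ‖w‖ • NormedSpace.normalize w

lemma norm_chiInv (w : ℂ) : ‖chiInv w‖ = chiInvRadius ‖w‖ := by
  rcases eq_or_ne w 0 with rfl | hw
  · simp [chiInv]
  · rw [chiInv, norm_smul, NormedSpace.norm_normalize hw, mul_one,
      Real.norm_of_nonneg (chiInvRadius_nonneg (norm_nonneg w))]

lemma chi_chiInv (w : ℂ) : chi (chiInv w) = w := by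
  have hρ := chiInvRadius_sq_add_mul (norm_nonneg w)
  have hρ1 := chiInvRadius_lt_one (norm_nonneg w)
  rw [chi_eq_smul, norm_chiInv, chiInv, smul_smul]
  convert NormedSpace.norm_smul_normalize w using 2
  field_simp [(by linarith : 1 - chiInvRadius ‖w‖ ≠ 0)]
  linear_combination hρ

lemma continuous_chiInv : Continuous chiInv := by
  refine continuous_iff_continuousAt.2 fun w => ?_
  rcases eq_or_ne w 0 with rfl | hw
  · rw [ContinuousAt, show chiInv 0 = 0 by simp [chiInv], tendsto_zero_iff_norm_tendsto_zero]
    simp only [norm_chiInv]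
    have : Continuous fun w : ℂ => chiInvRadius ‖w‖ := by fun_prop
    simpa using this.tendsto 0
  · exact (continuous_chiInvRadius.comp continuous_norm).continuousAt.smul
      (NormedSpace.continuousAt_normalize hw)

lemma tendsto_chiInv_sub_normalize :
    Tendsto (fun w => chiInv w - NormedSpace.normalize w) (cobounded ℂ) (𝓝 0) := by
  rw [tendsto_zero_iff_norm_tendsto_zero]
  have hρ : Tendsto (fun w : ℂ => 1 - chiInvRadius ‖w‖) (cobounded ℂ) (𝓝 0) := by
    simpa using (tendsto_const_nhds (x := (1 : ℝ))).sub
      (tendsto_chiInvRadius_atTop.comp tendsto_norm_cobounded_atTop)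
  refine squeeze_zero (fun _ => norm_nonneg _) (fun w => ?_) hρ
  have hρ1 : 0 ≤ 1 - chiInvRadius ‖w‖ := sub_nonneg.2 (chiInvRadius_lt_one (norm_nonneg w)).le
  calc ‖chiInv w - NormedSpace.normalize w‖
      = |chiInvRadius ‖w‖ - 1| * ‖NormedSpace.normalize w‖ := by
        rw [chiInv, ← Real.norm_eq_abs, ← norm_smul, sub_smul, one_smul]
    _ ≤ 1 - chiInvRadius ‖w‖ := by
        rw [abs_sub_comm, abs_of_nonneg hρ1]
        exact mul_le_of_le_one_right hρ1 (NormedSpace.norm_normalize_le w)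

lemma tendsto_chiInv_eval_sub_normalize_pow {P : Polynomial ℂ} (hP : P.Monic)
    (h : 0 < P.natDegree) :
    Tendsto (fun w => chiInv (P.eval w) - NormedSpace.normalize w ^ P.natDegree)
      (cobounded ℂ) (𝓝 0) := by
  simpa using (tendsto_chiInv_sub_normalize.comp (Polynomial.tendsto_eval_cobounded h)).add
    hP.tendsto_normalize_eval_sub_pow

lemma tendsto_chiInv_eval_chi_of_norm_eq_one {P : Polynomial ℂ} (hP : P.Monic)
    (h : 0 < P.natDegree) {x : ℂ} (hx : ‖x‖ = 1) :
    Tendsto (fun z => chiInv (P.eval (chi z))) (𝓝[Metric.ball 0 1] x) (𝓝 (x ^ P.natDegree)) := by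
  have hdir : Tendsto (fun z => NormedSpace.normalize z ^ P.natDegree) (𝓝[Metric.ball 0 1] x)
      (𝓝 (x ^ P.natDegree)) := by
    have hx0 : x ≠ 0 := norm_ne_zero_iff.1 (by simp [hx])
    have := ((NormedSpace.continuousAt_normalize hx0).tendsto.pow P.natDegree).mono_left
      (nhdsWithin_le_nhds (s := Metric.ball 0 1))
    rwa [NormedSpace.normalize_eq_self_of_norm_eq_one hx] at this
  have := ((tendsto_chiInv_eval_sub_normalize_pow hP h).comp (tendsto_chi_cobounded hx)).add hdir
  rw [zero_add] at this
  refine this.congr' ?_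
  filter_upwards [self_mem_nhdsWithin] with z hz
  rw [mem_ball_zero_iff] at hz
  simp [normalize_chi hz]

noncomputable def tunedExtension (P : Polynomial ℂ) (z : ℂ) : ℂ :=
  if ‖z‖ < 1 then chiInv (P.eval (chi z)) else z ^ P.natDegree

section
variable {P : Polynomial ℂ} {z : ℂ}

lemma tunedExtension_of_norm_lt_one (hz : ‖z‖ < 1) :
    tunedExtension P z = chiInv (P.eval (chi z)) :=
  if_pos hz

lemma tunedExtension_of_norm_eq_one (hz : ‖z‖ = 1) : tunedExtension P z = z ^ P.natDegree :=
  if_neg hz.not_lt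

lemma continuousOn_tunedExtension (hP : P.Monic) (h : 0 < P.natDegree) :
    ContinuousOn (tunedExtension P) (Metric.closedBall 0 1) := by
  intro x hx
  rcases (mem_closedBall_zero_iff.1 hx).lt_or_eq with hx | hx
  · have hball : Metric.ball (0 : ℂ) 1 ∈ 𝓝 x := Metric.isOpen_ball.mem_nhds (by simpa using hx)
    refine ContinuousAt.continuousWithinAt ((continuous_chiInv.continuousAt.comp
      (P.continuous.continuousAt.comp (continuousOn_chi.continuousAt hball))).congr ?_)
    filter_upwards [hball] with z hz
    exact (tunedExtension_of_norm_lt_one (mem_ball_zero_iff.1 hz)).symm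
  · rw [ContinuousWithinAt, tunedExtension_of_norm_eq_one hx, ← Metric.ball_union_sphere,
      nhdsWithin_union, tendsto_sup]
    constructor
    · refine (tendsto_chiInv_eval_chi_of_norm_eq_one hP h hx).congr' ?_
      filter_upwards [self_mem_nhdsWithin] with z hz
      exact (tunedExtension_of_norm_lt_one (mem_ball_zero_iff.1 hz)).symm
    · refine ((continuous_pow _).tendsto x |>.mono_left nhdsWithin_le_nhds).congr' ?_
      filter_upwards [self_mem_nhdsWithin] with z hz
      exact (tunedExtension_of_norm_eq_one (mem_sphere_zero_iff_norm.1 hz)).symm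

lemma mapsTo_tunedExtension :
    Set.MapsTo (tunedExtension P) (Metric.closedBall 0 1) (Metric.closedBall 0 1) := by
  intro z hz
  rw [mem_closedBall_zero_iff] at hz ⊢
  rcases hz.lt_or_eq with hz | hz
  · rw [tunedExtension_of_norm_lt_one hz, norm_chiInv]
    exact (chiInvRadius_lt_one (norm_nonneg _)).le
  · rw [tunedExtension_of_norm_eq_one hz, norm_pow, hz, one_pow]

end

/--
For a monic complex polynomial `P` of degree `d ≥ 1`, the conjugated map
`χ⁻¹ ∘ P ∘ χ : 𝔻 → 𝔻` extends continuously to the closed unit disc with boundary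
value `z ↦ z ^ d`: there is a continuous self-map `G` of the closed unit disc with
`χ (G z) = P (χ z)` for `|z| < 1` and `G z = z ^ d` for `|z| = 1`.
-/
theorem tuned_polynomial_extends_to_closed_disc
    (d : ℕ) (hd : 1 ≤ d) (P : Polynomial ℂ) (hmonic : P.Monic) (hdeg : P.natDegree = d) :
    ∃ G : ℂ → ℂ,
      ContinuousOn G (Metric.closedBall 0 1) ∧
      Set.MapsTo G (Metric.closedBall 0 1) (Metric.closedBall 0 1) ∧
      (∀ z : ℂ, ‖z‖ < 1 → chi (G z) = P.eval (chi z)) ∧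
      (∀ z : ℂ, ‖z‖ = 1 → G z = z ^ d) := by
  subst hdeg
  refine ⟨tunedExtension P, continuousOn_tunedExtension hmonic hd, mapsTo_tunedExtension,
    fun z hz => ?_, fun z hz => tunedExtension_of_norm_eq_one hz⟩
  rw [tunedExtension_of_norm_lt_one hz, chi_chiInv]
end
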